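/- Let M be a submonoid of the additive monoid ℚ₊ of nonnegative rational numbers and let F be a field. Then the monoid domain F[X;M] is a principal ideal domain if and only if M = {0} or M is isomorphic as an additive monoid to ℕ₀ = {0, 1, 2, …}. -/

import Mathlib

/-!
If `F[M]` is a principal ideal ring, the augmentation ideal, spanned by the monomials `X^a` with
`a ≠ 0`, is generated by some `g`. As `M` is linearly ordered, a product of two elements that are
not both monomials has two distinct extreme terms, so the divisor `g` of a monomial is itself a
monomial `c X^d`, with `d ≠ 0`, and `g ∣ X^a` puts every nonzero `a` in `d + M`. Since `M` is
archimedean, descending by `d` shows `M = ℕ • d ≅ ℕ`. Conversely `F[0] ≅ F` and `F[ℕ] ≅ F[X]`.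
-/

open AddMonoidAlgebra Submodule.IsPrincipal

namespace AddMonoidAlgebra

section Semiring

variable {R A : Type*} [Semiring R]

theorem exists_eq_single_of_mul_eq_single [NoZeroDivisors R] [Add A] [TwoUniqueSums A]
    {p q : R[A]} {a : A} {c : R} (hc : c ≠ 0) (h : p * q = single a c) :
    ∃ b r, r ≠ 0 ∧ p = single b r := by
  have hp : p ≠ 0 := by rintro rfl; simp [eq_comm, hc] at h
  have hq : q ≠ 0 := by rintro rfl; simp [eq_comm, hc] at h
  have hsum : ∀ x ∈ p.coeff.support, ∀ y ∈ q.coeff.support,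
      UniqueAdd p.coeff.support q.coeff.support x y → x + y = a := by
    intro x hx y hy hxy
    have hne : (p * q).coeff (x + y) ≠ 0 := by
      rw [coeff_mul_add_of_uniqueAdd hxy]
      exact mul_ne_zero (Finsupp.mem_support_iff.1 hx) (Finsupp.mem_support_iff.1 hy)
    rw [h, coeff_single] at hne
    exact (Finsupp.single_apply_ne_zero.1 hne).1
  have hcard : p.coeff.support.card * q.coeff.support.card ≤ 1 := by
    by_contra! hlt
    obtain ⟨⟨x₁, y₁⟩, h₁, ⟨x₂, y₂⟩, h₂, hne, hu₁, hu₂⟩ := TwoUniqueSums.uniqueAdd_of_one_lt_card hlt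
    rw [Finset.mem_product] at h₁ h₂
    obtain ⟨rfl, rfl⟩ := hu₁ h₂.1 h₂.2 ((hsum _ h₂.1 _ h₂.2 hu₂).trans (hsum _ h₁.1 _ h₁.2 hu₁).symm)
    exact hne rfl
  have hq₁ : 0 < q.coeff.support.card := by simpa [Finset.card_pos] using hq
  obtain ⟨b, hb, hpb⟩ := Finsupp.card_support_eq_one.1 (le_antisymm
    (le_of_mul_le_of_one_le_left hcard hq₁) (by simpa [Nat.one_le_iff_ne_zero] using hp))
  exact ⟨b, _, hb, coeff_injective (hpb.trans (coeff_single ..).symm)⟩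

variable [AddCommMonoid A] [Subsingleton (AddUnits A)]

variable (R A) in
noncomputable def constantCoeff : R[A] →+* R where
  toFun p := p.coeff 0
  map_zero' := rfl
  map_add' _ _ := rfl
  map_one' := by simp [one_def, coeff_single]
  map_mul' p q := by
    simpa using coeff_mul_add_of_uniqueAdd (a0 := (0 : A)) (b0 := 0) (f := p) (g := q)
      fun x y _ _ h ↦ add_eq_zero.1 (h.trans (add_zero 0))

theorem constantCoeff_apply (p : R[A]) : constantCoeff R A p = p.coeff 0 := rfl

@[simp]
theorem constantCoeff_single_zero (r : R) : constantCoeff R A (single 0 r) = r := by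
  simp [constantCoeff_apply, coeff_single]

theorem constantCoeff_single_of_ne {a : A} (ha : a ≠ 0) (r : R) :
    constantCoeff R A (single a r) = 0 := by
  simp [constantCoeff_apply, coeff_single, ha]

end Semiring

theorem exists_forall_eq_add_of_isPrincipalIdealRing (R A : Type*) [CommSemiring R]
    [NoZeroDivisors R] [Nontrivial R] [AddCommMonoid A] [Subsingleton (AddUnits A)]
    [TwoUniqueSums A] [Nontrivial A] [IsPrincipalIdealRing R[A]] :
    ∃ d : A, d ≠ 0 ∧ ∀ a ≠ 0, ∃ m, a = d + m := by
  set I := RingHom.ker (constantCoeff R A)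
  have hdvd : ∀ a : A, a ≠ 0 → generator I ∣ single a (1 : R) := fun a ha ↦
    (mem_iff_generator_dvd I).1 (constantCoeff_single_of_ne ha 1)
  obtain ⟨a₀, ha₀⟩ := exists_ne (0 : A)
  obtain ⟨q₀, hq₀⟩ := hdvd a₀ ha₀
  obtain ⟨d, c, hc, hg⟩ := exists_eq_single_of_mul_eq_single one_ne_zero hq₀.symm
  have hd : d ≠ 0 := by
    rintro rfl
    have hmem : generator I ∈ I := generator_mem I
    rw [hg, RingHom.mem_ker, constantCoeff_single_zero] at hmem
    exact hc hmem
  refine ⟨d, hd, fun a ha ↦ ?_⟩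
  obtain ⟨q, hq⟩ := hdvd a ha
  by_contra! hne
  have hcoeff := congrArg (coeff · a) hq
  rw [hg, coeff_single_mul_of_forall_add_ne _ _ fun m h ↦ hne m h.symm] at hcoeff
  simp [coeff_single] at hcoeff

end AddMonoidAlgebra

section NonnegOrder

variable {A : Type*} [AddCommMonoid A] [LinearOrder A] [IsOrderedCancelAddMonoid A]

theorem subsingleton_addUnits_of_nonneg (hA : ∀ a : A, 0 ≤ a) : Subsingleton (AddUnits A) :=
  subsingleton_of_forall_eq 0 fun u ↦
    AddUnits.ext ((add_eq_zero_iff_of_nonneg (hA _) (hA _)).1 u.val_neg).1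

theorem exists_nsmul_eq_of_forall_eq_add [Archimedean A] (hA : ∀ a : A, 0 ≤ a) {d : A}
    (hd : d ≠ 0) (h : ∀ a ≠ 0, ∃ m, a = d + m) (a : A) : ∃ n : ℕ, n • d = a := by
  obtain ⟨n, hn⟩ := Archimedean.arch a ((hA d).lt_of_ne' hd)
  induction n generalizing a with
  | zero => exact ⟨0, by rw [zero_nsmul]; exact le_antisymm (hA a) (by simpa using hn)⟩
  | succ n ih =>
    rcases eq_or_ne a 0 with rfl | ha
    · exact ⟨0, zero_nsmul d⟩
    obtain ⟨m, rfl⟩ := h a ha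
    rw [succ_nsmul'] at hn
    obtain ⟨k, rfl⟩ := ih m (le_of_add_le_add_left hn)
    exact ⟨k + 1, succ_nsmul' d k⟩

theorem nonempty_addEquiv_nat_of_forall_eq_add [Archimedean A] (hA : ∀ a : A, 0 ≤ a) {d : A}
    (hd : d ≠ 0) (h : ∀ a ≠ 0, ∃ m, a = d + m) : Nonempty (A ≃+ ℕ) :=
  ⟨(AddEquiv.ofBijective (multiplesHom A d)
    ⟨(nsmul_left_strictMono ((hA d).lt_of_ne' hd)).injective,
      exists_nsmul_eq_of_forall_eq_add hA hd h⟩).symm⟩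

end NonnegOrder

theorem monoidAlgebra_pid_iff (M : AddSubmonoid ℚ)
    (hM : ∀ x ∈ M, (0 : ℚ) ≤ x)
    (F : Type*) [Field F] :
    (IsDomain (AddMonoidAlgebra F M) ∧ IsPrincipalIdealRing (AddMonoidAlgebra F M)) ↔
      (M = ⊥ ∨ Nonempty (M ≃+ ℕ)) := by
  have hM₀ : ∀ a : M, 0 ≤ a := fun a ↦ hM a a.2
  -- `F[M]` is a domain for every `M`, since a linearly ordered cancellative monoid has `UniqueSums`.
  rw [and_iff_right (inferInstanceAs (IsDomain F[M]))]
  constructor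
  · intro _
    rcases M.bot_or_nontrivial with hbot | _
    · exact .inl hbot
    refine .inr ?_
    have := subsingleton_addUnits_of_nonneg hM₀
    obtain ⟨d, hd, h⟩ := exists_forall_eq_add_of_isPrincipalIdealRing F M
    exact nonempty_addEquiv_nat_of_forall_eq_add hM₀ hd h
  · rintro (rfl | ⟨⟨e⟩⟩)
    · have : Subsingleton (⊥ : AddSubmonoid ℚ) := ⟨fun a b ↦
        Subtype.ext <| (AddSubmonoid.mem_bot.1 a.2).trans (AddSubmonoid.mem_bot.1 b.2).symm⟩
      exact .of_surjective _ (uniqueRingEquiv (R := F) _).symm.surjective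
    · let ρ : Polynomial F ≃+* F[M] :=
        (Polynomial.toFinsuppIso F).trans (domCongr F F e.symm).toRingEquiv
      exact .of_surjective ρ.toRingHom ρ.surjective
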